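/- Let θ = θ⁻_{α,α_1,β_1,β_{−1}} be a conjugate-linear anti-involution of the twisted Heisenberg-Virasoro algebra 𝔏 of type (ii), and for each n ∈ ℤ let x_n ∈ ℂ be determined by conj(x_n)·α_1 + ((n+1)/2)β_1 − ((n−1)/2)α²β_{−1} = −α·x_n. Set L'_n := L_n + x_n I_n, and let C' ∈ 𝔏 be determined by ((n³−n)/12)C' = [L'_n, L'_{−n}] + 2n L'_0. Then the subalgebra Vir' of 𝔏 generated by {C', L'_n : n ∈ ℤ} is isomorphic to the Virasoro algebra (the elements L'_n, C' satisfy [L'_m, L'_n] = (n−m)L'_{m+n} + δ_{m+n,0}((m³−m)/12)C' with C' central in Vir'), and θ(L'_n) = −αⁿL'_n and θ(C') = −C'. -/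

import Mathlib

/-- Index type for the standard basis of the twisted Heisenberg-Virasoro algebra. -/
inductive HVIx : Type
  | l : ℤ → HVIx
  | i : ℤ → HVIx
  | cl : HVIx
  | ci : HVIx
  | cli : HVIx

/-- A complex Lie algebra `𝔏` equipped with the structure of the twisted
Heisenberg-Virasoro algebra: a basis `{L_m, I_m, C_L, C_I, C_LI}` with the
defining Lie brackets. -/
structure THV (𝔏 : Type*) [LieRing 𝔏] [LieAlgebra ℂ 𝔏] where
  b : Module.Basis HVIx ℂ 𝔏
  bracket_LL : ∀ m n : ℤ, ⁅b (.l m), b (.l n)⁆ =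
    ((n : ℂ) - (m : ℂ)) • b (.l (m + n)) +
      (if m + n = 0 then (((m : ℂ) ^ 3 - (m : ℂ)) / 12) • b .cl else 0)
  bracket_II : ∀ m n : ℤ, ⁅b (.i m), b (.i n)⁆ =
    (if m + n = 0 then (n : ℂ) • b .ci else 0)
  bracket_LI : ∀ m n : ℤ, ⁅b (.l m), b (.i n)⁆ =
    (n : ℂ) • b (.i (m + n)) +
      (if m + n = 0 then ((m : ℂ) ^ 2 - (m : ℂ)) • b .cli else 0)
  central_CL : ∀ x : 𝔏, ⁅x, b .cl⁆ = 0
  central_CI : ∀ x : 𝔏, ⁅x, b .ci⁆ = 0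
  central_CLI : ∀ x : 𝔏, ⁅x, b .cli⁆ = 0

namespace THV

variable {𝔏 : Type*} [LieRing 𝔏] [LieAlgebra ℂ 𝔏] (s : THV 𝔏)

/-- The element `L n`. -/
noncomputable def L (n : ℤ) : 𝔏 := s.b (.l n)
/-- The element `I n`. -/
noncomputable def I (n : ℤ) : 𝔏 := s.b (.i n)
/-- The central element `C_L`. -/
noncomputable def CL : 𝔏 := s.b .cl
/-- The central element `C_I`. -/
noncomputable def CI : 𝔏 := s.b .ci
/-- The central element `C_LI`. -/
noncomputable def CLI : 𝔏 := s.b .cli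

end THV

/-- `θ` is a conjugate-linear anti-involution of the complex Lie algebra `𝔤`. -/
structure IsConjAntiInvol (𝔤 : Type*) [LieRing 𝔤] [LieAlgebra ℂ 𝔤] (θ : 𝔤 → 𝔤) : Prop where
  map_add : ∀ x y : 𝔤, θ (x + y) = θ x + θ y
  map_smul : ∀ (c : ℂ) (x : 𝔤), θ (c • x) = (starRingEnd ℂ) c • θ x
  map_bracket : ∀ x y : 𝔤, θ ⁅x, y⁆ = ⁅θ y, θ x⁆
  invol : ∀ x : 𝔤, θ (θ x) = x

/-- A `𝔤`-module `V` is unitary with respect to `θ` if there is a positive definite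
Hermitian form `⟨·,·⟩` (linear in the first argument) with `⟨x·u, v⟩ = ⟨u, θ(x)·v⟩`. -/
def IsUnitaryWith (𝔤 : Type*) [LieRing 𝔤] [LieAlgebra ℂ 𝔤]
    (V : Type*) [AddCommGroup V] [Module ℂ V] [LieRingModule 𝔤 V]
    (θ : 𝔤 → 𝔤) : Prop :=
  ∃ B : V → V → ℂ,
    (∀ u v w : V, B (u + v) w = B u w + B v w) ∧
    (∀ (c : ℂ) (u v : V), B (c • u) v = c * B u v) ∧
    (∀ u v : V, B v u = (starRingEnd ℂ) (B u v)) ∧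
    (∀ v : V, v ≠ 0 → 0 < (B v v).re) ∧
    (∀ (x : 𝔤) (u v : V), B ⁅x, u⁆ v = B u ⁅θ x, v⁆)

/-!
Expanding `⁅L'_n, L'_{-n}⁆ + 2n L'_0` in the basis, the defining relation of `C'` at `n = 2` fixes
`C' = p I_0 + C_L + q C_LI + r C_I`, and comparing coordinates for all `n` turns the relation into
polynomial constraints on `x`. Eliminating `x_{±n}` leaves a cubic in `n² - 1` with roots
`0, 3, 8, 15`, which forces `p = 0`, `q = 24 x_0`, `r = 12 x_0²` and `x_n = (1 - n) x_0`. With `x`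
affine the `L'_n` satisfy the Virasoro relations on the nose, and `x_1 = 0` forces `β₁ = 0`; then
`θ(L'_n) = -αⁿ L'_n` is the defining equation of `x_n`, and `θ(C') = -C'` is a direct computation.
-/

section Coefficients

variable {x : ℤ → ℂ} {p q r : ℂ}

lemma cubic_of_coeff_eqs {n : ℤ} (hn : n ≠ 0)
    (ha : ((n : ℂ) ^ 3 - n) / 12 * p = n * (2 * x 0 - x n - x (-n)))
    (hb : ((n : ℂ) ^ 3 - n) / 12 * q = ((n : ℂ) ^ 2 - n) * x (-n) - ((n : ℂ) ^ 2 + n) * x n)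
    (hc : ((n : ℂ) ^ 3 - n) / 12 * r = -(n * x n * x (-n))) :
    (n : ℂ) ^ 2 * (((n : ℂ) ^ 2 - 1) * r / 3 + (2 * x 0 - ((n : ℂ) ^ 2 - 1) * p / 12) ^ 2) =
      (2 * x 0 + ((n : ℂ) ^ 2 - 1) * (q - p) / 12) ^ 2 := by
  have hn' : (n : ℂ) ≠ 0 := Int.cast_ne_zero.mpr hn
  have hsum : x n + x (-n) = 2 * x 0 - ((n : ℂ) ^ 2 - 1) * p / 12 :=
    mul_left_cancel₀ hn' (by linear_combination ha)
  have hdiff : n * (x (-n) - x n) = 2 * x 0 + ((n : ℂ) ^ 2 - 1) * (q - p) / 12 :=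
    mul_left_cancel₀ hn' (by linear_combination ha - hb)
  rw [← hsum, ← hdiff]
  linear_combination (4 * (n : ℂ)) * hc

/- The three equations are the `I_0`, `C_LI` and `C_I` coordinates of
`((n³ - n)/12) • (p I_0 + C_L + q C_LI + r C_I) = ⁅L'_n, L'_{-n}⁆ + 2n L'_0`. -/
lemma eq_affine_of_coeff_eqs
    (h : ∀ n : ℤ, ((n : ℂ) ^ 3 - n) / 12 * p = n * (2 * x 0 - x n - x (-n)) ∧
      ((n : ℂ) ^ 3 - n) / 12 * q = ((n : ℂ) ^ 2 - n) * x (-n) - ((n : ℂ) ^ 2 + n) * x n ∧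
      ((n : ℂ) ^ 3 - n) / 12 * r = -(n * x n * x (-n))) :
    p = 0 ∧ q = 24 * x 0 ∧ r = 12 * x 0 ^ 2 ∧ ∀ n : ℤ, x n = (1 - n) * x 0 := by
  have cubic (n : ℤ) (hn : n ≠ 0) := cubic_of_coeff_eqs hn (h n).1 (h n).2.1 (h n).2.2
  have E3 := cubic 2 (by norm_num)
  have E8 := cubic 3 (by norm_num)
  have E15 := cubic 4 (by norm_num)
  push_cast at E3 E8 E15
  -- `Eu` says `u (c₁ + c₂ u + c₃ u²) = 0` for `u = n² - 1`, with `c₃ = p² / 144`; the weights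
  -- below are those of Lagrange interpolation at `u = 3, 8, 15`.
  have hp : p = 0 := pow_eq_zero_iff two_ne_zero |>.mp <| by
    linear_combination (4 / 5 : ℂ) * E3 - (18 / 35 : ℂ) * E8 + (4 / 35 : ℂ) * E15
  subst hp
  have hq : q = 24 * x 0 := sub_eq_zero.mp <| pow_eq_zero_iff two_ne_zero |>.mp <| by
    linear_combination (432 / 5 : ℂ) * E3 - (72 / 5 : ℂ) * E8
  have hr : r = 12 * x 0 ^ 2 := by
    linear_combination (8 / 5 : ℂ) * E3 - (9 / 40 : ℂ) * E8 + x 0 * hq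
  subst hq
  refine ⟨rfl, rfl, hr, fun n => ?_⟩
  rcases eq_or_ne n 0 with rfl | hn
  · simp
  obtain ⟨ha, hb, -⟩ := h n
  have hn' : (n : ℂ) ≠ 0 := Int.cast_ne_zero.mpr hn
  refine mul_left_cancel₀ (pow_ne_zero 2 hn') ?_
  linear_combination ((n : ℂ) - 1) / 2 * ha + hb / 2

end Coefficients

namespace THV

variable {𝔏 : Type*} [LieRing 𝔏] [LieAlgebra ℂ 𝔏] (s : THV 𝔏)

noncomputable def shiftedL (x : ℤ → ℂ) (n : ℤ) : 𝔏 := s.L n + x n • s.I n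

noncomputable def shiftedC (c : ℂ) : 𝔏 := s.CL + (24 * c) • s.CLI + (12 * c ^ 2) • s.CI

lemma coeffs_eq_of_smul_add_eq {a b c d a' b' c' d' : ℂ}
    (h : a • s.I 0 + b • s.CL + c • s.CLI + d • s.CI =
      a' • s.I 0 + b' • s.CL + c' • s.CLI + d' • s.CI) :
    a = a' ∧ b = b' ∧ c = c' ∧ d = d' := by
  classical
  have h' := congrArg s.b.repr h
  simp only [I, CL, CLI, CI, map_add, map_smul, Module.Basis.repr_self] at h'
  refine ⟨?_, ?_, ?_, ?_⟩
  · simpa [Finsupp.single_apply] using DFunLike.congr_fun h' (.i 0)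
  · simpa [Finsupp.single_apply] using DFunLike.congr_fun h' .cl
  · simpa [Finsupp.single_apply] using DFunLike.congr_fun h' .cli
  · simpa [Finsupp.single_apply] using DFunLike.congr_fun h' .ci

lemma lie_I_L (m n : ℤ) : ⁅s.I m, s.L n⁆ =
    -((m : ℂ) • s.I (m + n) + if m + n = 0 then ((n : ℂ) ^ 2 - n) • s.CLI else 0) := by
  rw [← lie_skew]
  simp only [L, I, CLI]
  rw [s.bracket_LI n m, add_comm n m]

lemma lie_shiftedL (x : ℤ → ℂ) (m n : ℤ) : ⁅s.shiftedL x m, s.shiftedL x n⁆ =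
    ((n : ℂ) - m) • s.L (m + n) + ((n : ℂ) * x n - m * x m) • s.I (m + n) +
      if m + n = 0 then
        (((m : ℂ) ^ 3 - m) / 12) • s.CL + (((m : ℂ) ^ 2 - m) * x n - ((n : ℂ) ^ 2 - n) * x m) • s.CLI +
          ((n : ℂ) * (x m * x n)) • s.CI
      else 0 := by
  simp only [shiftedL, add_lie, lie_add, lie_smul, smul_lie, lie_I_L]
  simp only [L, I, CL, CLI, CI, s.bracket_LL, s.bracket_LI, s.bracket_II]
  split_ifs <;> match_scalars <;> ring

lemma lie_shiftedL_neg_add_smul (x : ℤ → ℂ) (n : ℤ) :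
    ⁅s.shiftedL x n, s.shiftedL x (-n)⁆ + (2 * (n : ℂ)) • s.shiftedL x 0 =
      (n * (2 * x 0 - x n - x (-n))) • s.I 0 + (((n : ℂ) ^ 3 - n) / 12) • s.CL +
        (((n : ℂ) ^ 2 - n) * x (-n) - ((n : ℂ) ^ 2 + n) * x n) • s.CLI +
          (-(n * x n * x (-n))) • s.CI := by
  rw [lie_shiftedL, add_neg_cancel, if_pos rfl, shiftedL]
  push_cast
  match_scalars <;> ring

theorem affine_and_eq_shiftedC {x : ℤ → ℂ} {C : 𝔏}
    (hC : ∀ n : ℤ, (((n : ℂ) ^ 3 - n) / 12) • C =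
      ⁅s.shiftedL x n, s.shiftedL x (-n)⁆ + (2 * (n : ℂ)) • s.shiftedL x 0) :
    (∀ n : ℤ, x n = (1 - n) * x 0) ∧ C = s.shiftedC (x 0) := by
  obtain ⟨p, q, r, hCpqr⟩ : ∃ p q r : ℂ, C = p • s.I 0 + s.CL + q • s.CLI + r • s.CI := by
    refine ⟨4 * (2 * x 0 - x 2 - x (-2)), 4 * x (-2) - 12 * x 2, -(4 * x 2 * x (-2)), ?_⟩
    calc C = (2 : ℂ) • (((((2 : ℤ) : ℂ) ^ 3 - ((2 : ℤ) : ℂ)) / 12) • C) := by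
          rw [smul_smul]; norm_num
      _ = _ := by rw [hC 2, lie_shiftedL_neg_add_smul]; push_cast; match_scalars <;> ring
  have hcoeffs (n : ℤ) := by
    have h := hC n
    rw [lie_shiftedL_neg_add_smul, hCpqr] at h
    simp only [smul_add, smul_smul] at h
    exact s.coeffs_eq_of_smul_add_eq h
  obtain ⟨rfl, rfl, rfl, hx⟩ :=
    eq_affine_of_coeff_eqs fun n => ⟨(hcoeffs n).1, (hcoeffs n).2.2.1, (hcoeffs n).2.2.2⟩
  refine ⟨hx, ?_⟩
  rw [hCpqr, shiftedC, zero_smul, zero_add]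

lemma lie_shiftedL_of_affine {x : ℤ → ℂ} (hx : ∀ n : ℤ, x n = (1 - n) * x 0) {m n : ℤ}
    (hmn : m + n ≠ 0) : ⁅s.shiftedL x m, s.shiftedL x n⁆ = ((n : ℂ) - m) • s.shiftedL x (m + n) := by
  rw [lie_shiftedL, if_neg hmn, add_zero, shiftedL, hx m, hx n, hx (m + n)]
  push_cast
  match_scalars <;> ring

lemma lie_shiftedC (y : 𝔏) (c : ℂ) : ⁅y, s.shiftedC c⁆ = 0 := by
  simp only [shiftedC, lie_add, lie_smul, CL, CLI, CI, s.central_CL, s.central_CLI, s.central_CI,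
    smul_zero, add_zero]

variable {θ : 𝔏 → 𝔏} {α α₁ β₁ βm : ℂ}

lemma theta_shiftedL (hθ : IsConjAntiInvol 𝔏 θ) (hα : α ≠ 0) (hβ₁ : β₁ = 0)
    (hθL : ∀ n : ℤ, θ (s.L n) = -(α ^ n) • s.L n +
      ((((n : ℂ) + 1) / 2) * α ^ (n - 1) * β₁ -
        (((n : ℂ) - 1) / 2) * α ^ (n + 1) * βm) • s.I n)
    (hθI : ∀ n : ℤ, n ≠ 0 → θ (s.I n) = (α₁ * α ^ (n - 1)) • s.I n)
    (hθI0 : θ (s.I 0) = (α₁ * α⁻¹) • s.I 0 - (α₁ * α ^ (-2 : ℤ) * β₁) • s.CI)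
    {x : ℤ → ℂ}
    (hx : ∀ n : ℤ, (starRingEnd ℂ) (x n) * α₁ + (((n : ℂ) + 1) / 2) * β₁ -
      (((n : ℂ) - 1) / 2) * α ^ 2 * βm = -α * x n)
    (n : ℤ) : θ (s.shiftedL x n) = -(α ^ n) • s.shiftedL x n := by
  subst hβ₁
  rw [shiftedL, hθ.map_add, hθ.map_smul, hθL n]
  rcases eq_or_ne n 0 with rfl | hn
  · have h0 := hx 0
    rw [hθI0]
    push_cast at h0 ⊢
    match_scalars
    · simp
    · rw [zpow_neg_one, zpow_one]
      field_simp
      linear_combination 2 * h0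
    · simp
  · have e0 : α ^ n = α ^ (n - 1) * α := by rw [← zpow_add_one₀ hα, sub_add_cancel]
    have e1 : α ^ (n + 1) = α ^ (n - 1) * α ^ 2 := by
      rw [← zpow_natCast, ← zpow_add₀ hα]; ring_nf
    rw [hθI n hn]
    match_scalars
    · rw [e0]
    · rw [e0, e1]
      linear_combination α ^ (n - 1) * hx n

lemma theta_shiftedC (hθ : IsConjAntiInvol 𝔏 θ) (hα : α ≠ 0) (hβ₁ : β₁ = 0)
    (hθCL : θ s.CL = -s.CL - (12 * (α⁻¹ * β₁ - α * βm)) • s.CLI +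
      (14 * βm * β₁ - 3 * α ^ (-2 : ℤ) * β₁ ^ 2 - 3 * α ^ 2 * βm ^ 2) • s.CI)
    (hθCI : θ s.CI = -(α₁ ^ 2 * α ^ (-2 : ℤ)) • s.CI)
    (hθCLI : θ s.CLI = (α₁ * α⁻¹) • s.CLI +
      ((1 / 2) * (α₁ * α ^ (-2 : ℤ) * β₁ - α₁ * βm)) • s.CI)
    {c : ℂ} (hc : (starRingEnd ℂ) c * α₁ = -α * c - α ^ 2 * βm / 2) :
    θ (s.shiftedC c) = -s.shiftedC c := by
  subst hβ₁
  rw [shiftedC, hθ.map_add, hθ.map_add, hθ.map_smul, hθ.map_smul, hθCL, hθCLI, hθCI]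
  simp only [map_mul, map_ofNat, map_pow, zpow_neg, zpow_ofNat]
  match_scalars
  · ring
  · field_simp
    linear_combination 24 * hc
  · field_simp
    linear_combination (-24 : ℂ) * hc * ((starRingEnd ℂ) c * α₁ - α * c - α ^ 2 * βm / 2) +
      (-24 * α ^ 2 * βm) * hc

end THV

theorem virPrime_general (𝔏 : Type*) [LieRing 𝔏] [LieAlgebra ℂ 𝔏] (s : THV 𝔏)
    (θ : 𝔏 → 𝔏) (hθ : IsConjAntiInvol 𝔏 θ)
    (α α₁ β₁ βm : ℂ)
    (habs : ‖α‖ = 1)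
    (hθL : ∀ n : ℤ, θ (s.L n) = -(α ^ n) • s.L n +
      ((((n : ℂ) + 1) / 2) * α ^ (n - 1) * β₁ -
        (((n : ℂ) - 1) / 2) * α ^ (n + 1) * βm) • s.I n)
    (hθCL : θ s.CL = -s.CL - (12 * (α⁻¹ * β₁ - α * βm)) • s.CLI +
      (14 * βm * β₁ - 3 * α ^ (-2 : ℤ) * β₁ ^ 2 - 3 * α ^ 2 * βm ^ 2) • s.CI)
    (hθI : ∀ n : ℤ, n ≠ 0 → θ (s.I n) = (α₁ * α ^ (n - 1)) • s.I n)
    (hθI0 : θ (s.I 0) = (α₁ * α⁻¹) • s.I 0 - (α₁ * α ^ (-2 : ℤ) * β₁) • s.CI)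
    (hθCI : θ s.CI = -(α₁ ^ 2 * α ^ (-2 : ℤ)) • s.CI)
    (hθCLI : θ s.CLI = (α₁ * α⁻¹) • s.CLI +
      ((1 / 2) * (α₁ * α ^ (-2 : ℤ) * β₁ - α₁ * βm)) • s.CI)
    (x : ℤ → ℂ)
    (hx : ∀ n : ℤ, (starRingEnd ℂ) (x n) * α₁ + (((n : ℂ) + 1) / 2) * β₁ -
      (((n : ℂ) - 1) / 2) * α ^ 2 * βm = -α * x n)
    (L' : ℤ → 𝔏) (hL' : ∀ n : ℤ, L' n = s.L n + x n • s.I n)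
    (C' : 𝔏)
    (hC' : ∀ n : ℤ, (((n : ℂ) ^ 3 - (n : ℂ)) / 12) • C' =
      ⁅L' n, L' (-n)⁆ + (2 * (n : ℂ)) • L' 0) :
    (∀ m n : ℤ, ⁅L' m, L' n⁆ = ((n : ℂ) - (m : ℂ)) • L' (m + n) +
      (if m + n = 0 then (((m : ℂ) ^ 3 - (m : ℂ)) / 12) • C' else 0)) ∧
    (∀ n : ℤ, ⁅L' n, C'⁆ = 0) ∧
    (∀ n : ℤ, θ (L' n) = -(α ^ n) • L' n) ∧
    θ C' = -C' := by
  have hα : α ≠ 0 := by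
    rintro rfl
    simp at habs
  obtain rfl : L' = s.shiftedL x := funext hL'
  obtain ⟨hx_affine, rfl⟩ := s.affine_and_eq_shiftedC hC'
  have hβ₁ : β₁ = 0 := by simpa [hx_affine 1] using hx 1
  have hx0 : (starRingEnd ℂ) (x 0) * α₁ = -α * x 0 - α ^ 2 * βm / 2 := by
    have h := hx 0
    push_cast at h
    linear_combination h - hβ₁ / 2
  refine ⟨fun m n => ?_, fun n => s.lie_shiftedC _ _,
    s.theta_shiftedL hθ hα hβ₁ hθL hθI hθI0 hx, s.theta_shiftedC hθ hα hβ₁ hθCL hθCI hθCLI hx0⟩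
  split_ifs with hmn
  · obtain rfl : n = -m := by omega
    rw [hC' m, add_neg_cancel]
    module
  · rw [s.lie_shiftedL_of_affine hx_affine hmn, add_zero]

/-- Lemma 2.6 (ii): let `θ = θ⁻_{α,α₁,β₁,β₋₁}` be a type (ii) conjugate-linear
anti-involution of `𝔏`, let `x_n` satisfy `conj(x_n) α₁ + ((n+1)/2)β₁ - ((n-1)/2)α²β₋₁ = -α x_n`,
set `L'_n := L_n + x_n I_n` and let `C'` be determined by
`((n³-n)/12) C' = [L'_n, L'_{-n}] + 2n L'_0`. Then `L'_n, C'` satisfy the Virasoro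
relations (so the subalgebra `Vir'` they generate is isomorphic to the Virasoro algebra),
`C'` is central in `Vir'`, and `θ(L'_n) = -αⁿ L'_n`, `θ(C') = -C'`. -/
theorem virPrime (𝔏 : Type*) [LieRing 𝔏] [LieAlgebra ℂ 𝔏] (s : THV 𝔏)
    (θ : 𝔏 → 𝔏) (hθ : IsConjAntiInvol 𝔏 θ)
    (α α₁ β₁ βm : ℂ)
    (habs : ‖α‖ = 1) (habs₁ : ‖α₁‖ = 1)
    (hc₁ : α₁ * (starRingEnd ℂ) β₁ = (starRingEnd ℂ) α * β₁)
    (hc₂ : α * βm = α₁ * (starRingEnd ℂ) βm)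
    (hc₃ : ((starRingEnd ℂ) α - α) * βm = 0)
    (hc₄ : β₁ * βm * (1 + ((starRingEnd ℂ) α) ^ 2) = 0)
    (hθL : ∀ n : ℤ, θ (s.L n) = -(α ^ n) • s.L n +
      ((((n : ℂ) + 1) / 2) * α ^ (n - 1) * β₁ -
        (((n : ℂ) - 1) / 2) * α ^ (n + 1) * βm) • s.I n)
    (hθCL : θ s.CL = -s.CL - (12 * (α⁻¹ * β₁ - α * βm)) • s.CLI +
      (14 * βm * β₁ - 3 * α ^ (-2 : ℤ) * β₁ ^ 2 - 3 * α ^ 2 * βm ^ 2) • s.CI)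
    (hθI : ∀ n : ℤ, n ≠ 0 → θ (s.I n) = (α₁ * α ^ (n - 1)) • s.I n)
    (hθI0 : θ (s.I 0) = (α₁ * α⁻¹) • s.I 0 - (α₁ * α ^ (-2 : ℤ) * β₁) • s.CI)
    (hθCI : θ s.CI = -(α₁ ^ 2 * α ^ (-2 : ℤ)) • s.CI)
    (hθCLI : θ s.CLI = (α₁ * α⁻¹) • s.CLI +
      ((1 / 2) * (α₁ * α ^ (-2 : ℤ) * β₁ - α₁ * βm)) • s.CI)
    (x : ℤ → ℂ)
    (hx : ∀ n : ℤ, (starRingEnd ℂ) (x n) * α₁ + (((n : ℂ) + 1) / 2) * β₁ -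
      (((n : ℂ) - 1) / 2) * α ^ 2 * βm = -α * x n)
    (L' : ℤ → 𝔏) (hL' : ∀ n : ℤ, L' n = s.L n + x n • s.I n)
    (C' : 𝔏)
    (hC' : ∀ n : ℤ, (((n : ℂ) ^ 3 - (n : ℂ)) / 12) • C' =
      ⁅L' n, L' (-n)⁆ + (2 * (n : ℂ)) • L' 0) :
    (∀ m n : ℤ, ⁅L' m, L' n⁆ = ((n : ℂ) - (m : ℂ)) • L' (m + n) +
      (if m + n = 0 then (((m : ℂ) ^ 3 - (m : ℂ)) / 12) • C' else 0)) ∧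
    (∀ n : ℤ, ⁅L' n, C'⁆ = 0) ∧
    (∀ n : ℤ, θ (L' n) = -(α ^ n) • L' n) ∧
    θ C' = -C' :=
  virPrime_general 𝔏 s θ hθ α α₁ β₁ βm habs hθL hθCL hθI hθI0 hθCI hθCLI x hx L' hL' C' hC'
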